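/- arXiv:2511.22993 — 3 statements merged into one kernel-verified Lean document; each statement's English description precedes it below -/
import Mathlib

section
/- Let E be a real inner product space and let κ : E × E → ℝ be a symmetric positive semidefinite kernel that is nonexpansive in the feature-map sense: κ(x,x) − 2 κ(x,y) + κ(y,y) ≤ ‖x − y‖² for all x, y ∈ E. Fix points z₁, …, z_T ∈ E and coefficients ω ∈ ℝ^T, let K ∈ ℝ^{T×T} be the kernel matrix with entries K_{ij} = κ(z_i, z_j), and define g : E → ℝ by g(x) = Σ_{j=1}^T ω_j κ(x, z_j). Then g is Lipschitz continuous with Lipschitz constant √(ωᵀ K ω): for all x, y ∈ E, |g(x) − g(y)| ≤ √(ωᵀ K ω) · ‖x − y‖. (Honest form of Theorem 1(i): the Lipschitz constant of the kernel-based residual equals the RKHS norm ωᵀ K ω raised to the 1/2.) -/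
/-!
The Gram matrix of `κ` at the points `x, y, z₁, …, z_T` is symmetric positive semidefinite, so
Cauchy–Schwarz for its bilinear form, applied to the coefficient vectors `e_x - e_y` and `ω`,
gives `(g x - g y)² ≤ (κ(x,x) - 2κ(x,y) + κ(y,y)) · ωᵀKω ≤ ‖x - y‖² · ωᵀKω`.
-/

open Matrix

theorem Matrix.sq_dotProduct_mulVec_le {R n : Type*} [CommRing R] [LinearOrder R]
    [IsStrictOrderedRing R] [Fintype n] {M : Matrix n n R} (hM : M.IsSymm)
    (hnonneg : ∀ c, 0 ≤ c ⬝ᵥ M *ᵥ c) (u v : n → R) :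
    (u ⬝ᵥ M *ᵥ v) ^ 2 ≤ (u ⬝ᵥ M *ᵥ u) * (v ⬝ᵥ M *ᵥ v) := by
  classical
  simpa only [toBilin'_apply'] using
    (toBilin' M).apply_sq_le_of_symm (by simpa only [toBilin'_apply'] using hnonneg)
      (LinearMap.BilinForm.isSymm_iff.mp (isSymm_toBilin'_iff_isSymm.mpr hM)) u v

section Kernel

variable {X : Type*} (κ : X → X → ℝ)

def kernelMatrix {ι : Type*} (p : ι → X) : Matrix ι ι ℝ :=
  Matrix.of fun i j => κ (p i) (p j)

variable {κ}

theorem dotProduct_kernelMatrix_mulVec {ι : Type*} [Fintype ι] (p : ι → X) (u v : ι → ℝ) :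
    u ⬝ᵥ kernelMatrix κ p *ᵥ v = ∑ i, ∑ j, u i * v j * κ (p i) (p j) := by
  simp only [dotProduct, mulVec, kernelMatrix, of_apply, Finset.mul_sum]
  exact Finset.sum_congr rfl fun i _ => Finset.sum_congr rfl fun j _ => by ring

theorem kernelMatrix_isSymm (hsymm : ∀ a b, κ a b = κ b a) {ι : Type*} (p : ι → X) :
    (kernelMatrix κ p).IsSymm :=
  IsSymm.ext fun i j => hsymm (p j) (p i)

theorem dotProduct_kernelMatrix_mulVec_self_nonneg
    (hpsd : ∀ (m : ℕ) (p : Fin m → X) (c : Fin m → ℝ),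
      0 ≤ ∑ i, ∑ j, c i * c j * κ (p i) (p j))
    {m : ℕ} (p : Fin m → X) (c : Fin m → ℝ) :
    0 ≤ c ⬝ᵥ kernelMatrix κ p *ᵥ c :=
  (dotProduct_kernelMatrix_mulVec p c c).symm ▸ hpsd m p c

theorem sq_kernelExpansion_sub_le (hsymm : ∀ a b, κ a b = κ b a)
    (hpsd : ∀ (m : ℕ) (p : Fin m → X) (c : Fin m → ℝ),
      0 ≤ ∑ i, ∑ j, c i * c j * κ (p i) (p j))
    {T : ℕ} (z : Fin T → X) (ω : Fin T → ℝ) (x y : X) :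
    (∑ j, ω j * κ x (z j) - ∑ j, ω j * κ y (z j)) ^ 2 ≤
      (κ x x - 2 * κ x y + κ y y) * (ω ⬝ᵥ kernelMatrix κ z *ᵥ ω) := by
  set p : Fin (T + 2) → X := Fin.cons x (Fin.cons y z)
  set u : Fin (T + 2) → ℝ := Fin.cons 1 (Fin.cons (-1) 0)
  set v : Fin (T + 2) → ℝ := Fin.cons 0 (Fin.cons 0 ω)
  have huv : u ⬝ᵥ kernelMatrix κ p *ᵥ v = ∑ j, ω j * κ x (z j) - ∑ j, ω j * κ y (z j) := by
    simp only [dotProduct_kernelMatrix_mulVec, Fin.sum_univ_succ, Fin.cons_zero, Fin.cons_succ,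
      Pi.zero_apply, mul_zero, zero_mul, one_mul, neg_mul, zero_add, add_zero,
      Finset.sum_neg_distrib, Finset.sum_const_zero, u, p, v]
    ring
  have huu : u ⬝ᵥ kernelMatrix κ p *ᵥ u = κ x x - 2 * κ x y + κ y y := by
    simp only [dotProduct_kernelMatrix_mulVec, Fin.sum_univ_succ, Fin.cons_zero, Fin.cons_succ,
      Pi.zero_apply, mul_zero, zero_mul, mul_one, one_mul, mul_neg, neg_mul, neg_neg, neg_zero,
      add_zero, Finset.sum_const_zero, hsymm y x, u, p]
    ring
  have hvv : v ⬝ᵥ kernelMatrix κ p *ᵥ v = ω ⬝ᵥ kernelMatrix κ z *ᵥ ω := by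
    simp [dotProduct_kernelMatrix_mulVec, Fin.sum_univ_succ, p, v]
  have hcs := sq_dotProduct_mulVec_le (kernelMatrix_isSymm hsymm p)
    (dotProduct_kernelMatrix_mulVec_self_nonneg hpsd p) u v
  rwa [huv, huu, hvv] at hcs

end Kernel

theorem kernel_expansion_lipschitz_general
    {E : Type*} [NormedAddCommGroup E]
    (κ : E → E → ℝ)
    (hsymm : ∀ z z' : E, κ z z' = κ z' z)
    (hpsd : ∀ (m : ℕ) (z : Fin m → E) (c : Fin m → ℝ),
      0 ≤ ∑ i, ∑ j, c i * c j * κ (z i) (z j))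
    (hnonexp : ∀ x y : E, κ x x - 2 * κ x y + κ y y ≤ ‖x - y‖ ^ 2)
    (T : ℕ) (z : Fin T → E) (ω : Fin T → ℝ)
    (K : Matrix (Fin T) (Fin T) ℝ) (hK : ∀ i j, K i j = κ (z i) (z j))
    (g : E → ℝ) (hg : ∀ x, g x = ∑ j, ω j * κ x (z j)) :
    ∀ x y : E, |g x - g y| ≤ Real.sqrt (ω ⬝ᵥ K *ᵥ ω) * ‖x - y‖ := by
  intro x y
  obtain rfl : K = kernelMatrix κ z := Matrix.ext hK
  have hω := dotProduct_kernelMatrix_mulVec_self_nonneg hpsd z ω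
  have hsq : (g x - g y) ^ 2 ≤ (ω ⬝ᵥ kernelMatrix κ z *ᵥ ω) * ‖x - y‖ ^ 2 := by
    rw [hg, hg, mul_comm]
    exact (sq_kernelExpansion_sub_le hsymm hpsd z ω x y).trans
      (mul_le_mul_of_nonneg_right (hnonexp x y) hω)
  calc |g x - g y| ≤ √((ω ⬝ᵥ kernelMatrix κ z *ᵥ ω) * ‖x - y‖ ^ 2) := Real.abs_le_sqrt hsq
    _ = √(ω ⬝ᵥ kernelMatrix κ z *ᵥ ω) * ‖x - y‖ := by
      rw [Real.sqrt_mul hω, Real.sqrt_sq (norm_nonneg _)]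

/-- **Theorem 1(i), honest form.**
For a symmetric PSD kernel `κ` on a real inner product space `E` that is
nonexpansive in the feature-map sense
(`κ(x,x) − 2κ(x,y) + κ(y,y) ≤ ‖x − y‖²`), the kernel expansion
`g(x) = Σ_j ω_j κ(x, z_j)` is Lipschitz with constant `√(ωᵀ K ω)`,
where `K` is the kernel matrix of the points `z₁, …, z_T`. -/
theorem kernel_expansion_lipschitz
    {E : Type*} [NormedAddCommGroup E] [InnerProductSpace ℝ E]
    (κ : E → E → ℝ)
    (hsymm : ∀ z z' : E, κ z z' = κ z' z)
    (hpsd : ∀ (m : ℕ) (z : Fin m → E) (c : Fin m → ℝ),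
      0 ≤ ∑ i, ∑ j, c i * c j * κ (z i) (z j))
    (hnonexp : ∀ x y : E, κ x x - 2 * κ x y + κ y y ≤ ‖x - y‖ ^ 2)
    (T : ℕ) (z : Fin T → E) (ω : Fin T → ℝ)
    (K : Matrix (Fin T) (Fin T) ℝ) (hK : ∀ i j, K i j = κ (z i) (z j))
    (g : E → ℝ) (hg : ∀ x, g x = ∑ j, ω j * κ x (z j)) :
    ∀ x y : E, |g x - g y| ≤ Real.sqrt (ω ⬝ᵥ K *ᵥ ω) * ‖x - y‖ :=
  kernel_expansion_lipschitz_general κ hsymm hpsd hnonexp T z ω K hK g hg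
end

section
/- Consider scalar data: states x₀, x₁, …, x_T ∈ ℝ, inputs u₀, …, u_{T−1} ∈ ℝ, and scalars A, B ∈ ℝ. Let κ : ℝ × ℝ → ℝ be a symmetric positive semidefinite kernel that is nonexpansive in the feature-map sense: κ(x,x) − 2κ(x,y) + κ(y,y) ≤ |x − y|² for all x, y ∈ ℝ. Let K ∈ ℝ^{T×T} have entries K_{ij} = κ(x_{i−1}, x_{j−1}), let γ > 0, and define X = (x₁, …, x_T)ᵀ, Γ = (A x₀ + B u₀, …, A x_{T−1} + B u_{T−1})ᵀ, ω = (K + γ I_T)^{−1}(X − Γ), and the residual δ : ℝ → ℝ by δ(x) = Σ_{j=1}^T ω_j κ(x, x_{j−1}). Set ℓ_δ = √(ωᵀ K ω). If ℓ_δ < 1 − |A|, then the identified model map F(x) = A x + δ(x) is strongly contracting with respect to the absolute value with contraction factor ℓ := |A| + ℓ_δ < 1: for all x, x' ∈ ℝ and all τ ≥ 0, |F^[τ](x) − F^[τ](x')| ≤ ℓ^τ |x − x'|. (Theorem 1: contractivity of the identified Lur'e model.) -/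
open Matrix

lemma psd_quadratic (n : ℕ) (κ : ℝ → ℝ → ℝ)
    (hsymm : ∀ z z' : ℝ, κ z z' = κ z' z)
    (hpsd : ∀ (m : ℕ) (z : Fin m → ℝ) (c : Fin m → ℝ),
      0 ≤ ∑ i, ∑ j, c i * c j * κ (z i) (z j))
    (z c : Fin n → ℝ) (a b t : ℝ) :
    0 ≤ (κ a a - 2 * κ a b + κ b b) * t ^ 2
        + (2 * ∑ j, c j * (κ a (z j) - κ b (z j))) * t
        + ∑ i, ∑ j, c i * c j * κ (z i) (z j) := by
  have h := hpsd (n + 2) (Fin.snoc (Fin.snoc z a) b) (Fin.snoc (Fin.snoc c t) (-t))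
  simp only [Fin.sum_univ_castSucc, Fin.snoc_castSucc, Fin.snoc_last] at h
  have h1 : ∀ j, κ (z j) a = κ a (z j) := fun j => hsymm _ _
  have h2 : ∀ j, κ (z j) b = κ b (z j) := fun j => hsymm _ _
  have h3 : κ b a = κ a b := hsymm _ _
  simp_rw [h1, h2, h3, Finset.sum_add_distrib] at h
  set S1 := ∑ j, c j * κ a (z j) with hS1
  set S2 := ∑ j, c j * κ b (z j) with hS2
  set Q := ∑ i, ∑ j, c i * c j * κ (z i) (z j) with hQ
  have eA : ∑ j, c j * t * κ a (z j) = t * S1 := by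
    rw [hS1, Finset.mul_sum]; exact Finset.sum_congr rfl fun i _ => by ring
  have eA' : ∑ j, t * c j * κ a (z j) = t * S1 := by
    rw [hS1, Finset.mul_sum]; exact Finset.sum_congr rfl fun i _ => by ring
  have eB : ∑ j, c j * -t * κ b (z j) = -(t * S2) := by
    rw [hS2, Finset.mul_sum, ← Finset.sum_neg_distrib]
    exact Finset.sum_congr rfl fun i _ => by ring
  have eB' : ∑ j, -t * c j * κ b (z j) = -(t * S2) := by
    rw [hS2, Finset.mul_sum, ← Finset.sum_neg_distrib]
    exact Finset.sum_congr rfl fun i _ => by ring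
  have eS : ∑ j, c j * (κ a (z j) - κ b (z j)) = S1 - S2 := by
    rw [hS1, hS2, ← Finset.sum_sub_distrib]
    exact Finset.sum_congr rfl fun i _ => by ring
  rw [eA, eB, eA', eB'] at h
  rw [eS]
  calc (0:ℝ) ≤ _ := h
    _ = _ := by ring

/-- **Theorem 1 (contractivity of the identified Lur'e model), scalar case.**
Given scalar data `x₀, …, x_T`, inputs `u₀, …, u_{T−1}`, scalars `A, B`,
a symmetric PSD nonexpansive kernel `κ`, kernel matrix `K`, regularization
`γ > 0`, coefficients `ω = (K + γ I)⁻¹ (X − Γ)`, residual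
`δ(x) = Σ_j ω_j κ(x, x_{j−1})` and `ℓ_δ = √(ωᵀ K ω)`: if `ℓ_δ < 1 − |A|`,
then `F(x) = A x + δ(x)` is strongly contracting with factor `|A| + ℓ_δ`. -/
theorem identified_lure_model_contractive
    (T : ℕ) (x : Fin (T + 1) → ℝ) (u : Fin T → ℝ) (A B : ℝ)
    (κ : ℝ → ℝ → ℝ)
    (hsymm : ∀ z z' : ℝ, κ z z' = κ z' z)
    (hpsd : ∀ (m : ℕ) (z : Fin m → ℝ) (c : Fin m → ℝ),
      0 ≤ ∑ i, ∑ j, c i * c j * κ (z i) (z j))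
    (hnonexp : ∀ a b : ℝ, κ a a - 2 * κ a b + κ b b ≤ |a - b| ^ 2)
    (K : Matrix (Fin T) (Fin T) ℝ)
    (hK : ∀ i j, K i j = κ (x i.castSucc) (x j.castSucc))
    (γ : ℝ) (hγ : 0 < γ)
    (X Γ : Fin T → ℝ)
    (hX : ∀ t, X t = x t.succ)
    (hΓ : ∀ t, Γ t = A * x t.castSucc + B * u t)
    (ω : Fin T → ℝ)
    (hω : ω = (K + γ • (1 : Matrix (Fin T) (Fin T) ℝ))⁻¹ *ᵥ (X - Γ))
    (δ : ℝ → ℝ) (hδ : ∀ s, δ s = ∑ j, ω j * κ s (x j.castSucc))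
    (ℓδ : ℝ) (hℓδ : ℓδ = Real.sqrt (ω ⬝ᵥ K *ᵥ ω))
    (hcontr : ℓδ < 1 - |A|)
    (F : ℝ → ℝ) (hF : ∀ s, F s = A * s + δ s) :
    ∀ (s s' : ℝ) (τ : ℕ), |F^[τ] s - F^[τ] s'| ≤ (|A| + ℓδ) ^ τ * |s - s'| := by

  set N := ω ⬝ᵥ K *ᵥ ω with hNdef
  have hNsum : N = ∑ i, ∑ j, ω i * ω j * κ (x i.castSucc) (x j.castSucc) := by
    simp only [hNdef, dotProduct, Matrix.mulVec, dotProduct, hK, Finset.mul_sum]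
    exact Finset.sum_congr rfl fun i _ => Finset.sum_congr rfl fun j _ => by ring
  have hN0 : 0 ≤ N := by
    rw [hNsum]; exact hpsd T (fun i => x i.castSucc) ω
  have hL0 : 0 ≤ ℓδ := hℓδ ▸ Real.sqrt_nonneg _
  have hL2 : ℓδ ^ 2 = N := by rw [hℓδ, Real.sq_sqrt hN0]
  have hLip : ∀ a b : ℝ, |δ a - δ b| ≤ ℓδ * |a - b| := by
    intro a b
    set P := ∑ j, ω j * (κ a (x j.castSucc) - κ b (x j.castSucc)) with hPdef
    have hP : δ a - δ b = P := by
      rw [hδ, hδ, hPdef, ← Finset.sum_sub_distrib]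
      exact Finset.sum_congr rfl fun j _ => by ring
    set M := κ a a - 2 * κ a b + κ b b with hMdef
    have hq : ∀ t : ℝ, 0 ≤ M * t ^ 2 + (2 * P) * t + N := by
      intro t
      rw [hNsum]
      exact psd_quadratic T κ hsymm hpsd (fun i => x i.castSucc) ω a b t
    have hdisc : discrim M (2 * P) N ≤ 0 := discrim_le_zero (fun t => by rw [← pow_two]; exact hq t)
    rw [discrim] at hdisc
    have hPsq : P ^ 2 ≤ M * N := by nlinarith
    have hM : M ≤ |a - b| ^ 2 := hnonexp a b
    have hPsq2 : P ^ 2 ≤ (ℓδ * |a - b|) ^ 2 := by nlinarith [sq_nonneg (a - b), abs_nonneg (a-b), sq_abs (a-b)]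
    have hrhs : 0 ≤ ℓδ * |a - b| := mul_nonneg hL0 (abs_nonneg _)
    rw [hP]
    nlinarith [sq_abs P, abs_nonneg P]
  have hFlip : ∀ a b : ℝ, |F a - F b| ≤ (|A| + ℓδ) * |a - b| := by
    intro a b
    rw [hF, hF]
    have : A * a + δ a - (A * b + δ b) = A * (a - b) + (δ a - δ b) := by ring
    rw [this]
    calc |A * (a - b) + (δ a - δ b)| ≤ |A * (a - b)| + |δ a - δ b| := abs_add_le _ _
      _ ≤ |A| * |a - b| + ℓδ * |a - b| := by
          rw [abs_mul]; exact add_le_add le_rfl (hLip a b)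
      _ = (|A| + ℓδ) * |a - b| := by ring
  intro s s' τ
  induction τ with
  | zero => simp
  | succ n ih =>
    rw [Function.iterate_succ_apply', Function.iterate_succ_apply', pow_succ']
    calc |F (F^[n] s) - F (F^[n] s')| ≤ (|A| + ℓδ) * |F^[n] s - F^[n] s'| := hFlip _ _
      _ ≤ (|A| + ℓδ) * ((|A| + ℓδ) ^ n * |s - s'|) := by
          apply mul_le_mul_of_nonneg_left ih (by positivity)
      _ = (|A| + ℓδ) * (|A| + ℓδ) ^ n * |s - s'| := by ring
end

section
/- Let K be a real symmetric positive semidefinite T×T matrix, γ > 0, and set Ψ = (K + γ I_T)^{−1}. Let Ξ be a real T×p matrix such that Ξᵀ Ψ Ξ is invertible, and let X₀ ∈ ℝ^T. For θ ∈ ℝ^p define ω(θ) = Ψ (X₀ − Ξ θ) and the cost J(θ) = ‖X₀ − Ξ θ − K ω(θ)‖₂² + γ · ω(θ)ᵀ K ω(θ). Then θ* = (Ξᵀ Ψ Ξ)^{−1} Ξᵀ Ψ X₀ is a global minimizer of J: J(θ*) ≤ J(θ) for all θ ∈ ℝ^p. (Closed-form solution of the reduced kernel-based identification problem in the affine-in-parameters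 case.) -/
open Matrix RealInnerProductSpace

/-!
Since `(K + γ I) Ψ = I`, the part of the residual `r = X₀ - Ξ θ` left unexplained by the kernel
term is `r - K Ψ r = γ Ψ r`, and the cost collapses to `J θ = γ ⟪r, Ψ r⟫`. This is a generalized
least-squares problem with positive weight `Ψ`: it is minimized wherever the residual is
`Ψ`-orthogonal to the range of `Ξ`, which is exactly what the normal equations
`Ξᵀ Ψ Ξ θ* = Ξᵀ Ψ X₀` say.
-/

section InnerProductSpace

variable {E F : Type*} [NormedAddCommGroup E] [InnerProductSpace ℝ E]

theorem norm_sub_sq_add_inner_eq_of_resolvent {K Ψ : E →ₗ[ℝ] E} {γ : ℝ}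
    (hres : ∀ v, K (Ψ v) + γ • Ψ v = v) (r : E) :
    ‖r - K (Ψ r)‖ ^ 2 + γ * ⟪Ψ r, K (Ψ r)⟫ = γ * ⟪r, Ψ r⟫ := by
  have hr : r - K (Ψ r) = γ • Ψ r := by rw [sub_eq_iff_eq_add', hres]
  have hr' : ⟪r, Ψ r⟫ = ⟪Ψ r, K (Ψ r) + γ • Ψ r⟫ := by rw [hres, real_inner_comm]
  rw [hr, hr', ← real_inner_self_eq_norm_sq, inner_add_right, real_inner_smul_left,
    real_inner_smul_right]
  ring

namespace LinearMap.IsPositive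

variable {L : E →ₗ[ℝ] E}

theorem inner_apply_le_inner_add_apply (hL : L.IsPositive) {r v : E} (hv : ⟪v, L r⟫ = 0) :
    ⟪r, L r⟫ ≤ ⟪r + v, L (r + v)⟫ := by
  have hcross : ⟪r, L v⟫ = 0 := by rw [← hL.isSymmetric, real_inner_comm, hv]
  rw [map_add, inner_add_left, inner_add_right, inner_add_right, hv, hcross]
  linarith [hL.inner_nonneg_right v]

variable [AddCommGroup F] [Module ℝ F]

theorem inner_sub_apply_le_of_orthogonal (hL : L.IsPositive) (M : F →ₗ[ℝ] E) (x : E) {θ₀ : F}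
    (h₀ : ∀ d, ⟪M d, L (x - M θ₀)⟫ = 0) (θ : F) :
    ⟪x - M θ₀, L (x - M θ₀)⟫ ≤ ⟪x - M θ, L (x - M θ)⟫ := by
  have hθ : x - M θ = (x - M θ₀) + M (θ₀ - θ) := by rw [map_sub]; abel
  rw [hθ]
  exact hL.inner_apply_le_inner_add_apply (h₀ _)

end LinearMap.IsPositive

end InnerProductSpace

namespace Matrix

variable {m n : Type*} [Fintype m] [Fintype n] [DecidableEq n]

theorem transpose_mulVec_gls_residual_eq_zero {R : Type*} [CommRing R] {Ψ : Matrix m m R}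
    {Ξ : Matrix m n R} (h : IsUnit (Ξᵀ * Ψ * Ξ)) (x : m → R) :
    Ξᵀ *ᵥ (Ψ *ᵥ (x - Ξ *ᵥ (((Ξᵀ * Ψ * Ξ)⁻¹ * Ξᵀ * Ψ) *ᵥ x))) = 0 := by
  have hnormal : Ξᵀ * Ψ * Ξ * ((Ξᵀ * Ψ * Ξ)⁻¹ * Ξᵀ) * Ψ = Ξᵀ * Ψ := by
    rw [← Matrix.mul_assoc, mul_nonsing_inv _ ((isUnit_iff_isUnit_det _).1 h), Matrix.one_mul]
  rw [mulVec_sub, mulVec_sub, mulVec_mulVec, mulVec_mulVec, mulVec_mulVec, mulVec_mulVec,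
    ← Matrix.mul_assoc, hnormal, sub_self]

variable [DecidableEq m]

theorem toEuclideanLin_add_smul_apply_eq_self {𝕜 : Type*} [RCLike 𝕜] {K Ψ : Matrix m m 𝕜}
    {γ : 𝕜} (h : (K + γ • 1) * Ψ = 1) (v : EuclideanSpace 𝕜 m) :
    toEuclideanLin K (toEuclideanLin Ψ v) + γ • toEuclideanLin Ψ v = v := by
  simpa [add_mul, toLpLin_mul, mulVec_mulVec] using congrArg (toEuclideanLin · v) h

theorem inner_toEuclideanLin_gls_residual_eq_zero {Ψ : Matrix m m ℝ} {Ξ : Matrix m n ℝ}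
    (h : IsUnit (Ξᵀ * Ψ * Ξ)) (x : EuclideanSpace ℝ m) (d : EuclideanSpace ℝ n) :
    ⟪toEuclideanLin Ξ d, toEuclideanLin Ψ
      (x - toEuclideanLin Ξ (toEuclideanLin ((Ξᵀ * Ψ * Ξ)⁻¹ * Ξᵀ * Ψ) x))⟫ = 0 := by
  rw [← LinearMap.adjoint_inner_right, ← toEuclideanLin_conjTranspose_eq_adjoint,
    conjTranspose_eq_transpose_of_trivial]
  simp only [toLpLin_apply, WithLp.ofLp_sub, transpose_mulVec_gls_residual_eq_zero h,
    WithLp.toLp_zero, inner_zero_right]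

end Matrix

/-- **Closed-form solution of the reduced kernel-based identification problem
(affine-in-parameters case).**
With `Ψ = (K + γ I)⁻¹`, `ω(θ) = Ψ (X₀ − Ξ θ)` and
`J(θ) = ‖X₀ − Ξ θ − K ω(θ)‖₂² + γ ω(θ)ᵀ K ω(θ)`, if `Ξᵀ Ψ Ξ` is invertible
then `θ* = (Ξᵀ Ψ Ξ)⁻¹ Ξᵀ Ψ X₀` is a global minimizer of `J`. -/
theorem reduced_identification_closed_form
    (T p : ℕ) (K : Matrix (Fin T) (Fin T) ℝ) (hK : K.PosSemidef)
    (γ : ℝ) (hγ : 0 < γ)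
    (Ψ : Matrix (Fin T) (Fin T) ℝ)
    (hΨ : Ψ = (K + γ • (1 : Matrix (Fin T) (Fin T) ℝ))⁻¹)
    (Ξ : Matrix (Fin T) (Fin p) ℝ)
    (hinv : IsUnit (Ξᵀ * Ψ * Ξ))
    (X₀ : EuclideanSpace ℝ (Fin T))
    (ω : EuclideanSpace ℝ (Fin p) → EuclideanSpace ℝ (Fin T))
    (hω : ∀ θ, ω θ = Matrix.toEuclideanLin Ψ (X₀ - Matrix.toEuclideanLin Ξ θ))
    (J : EuclideanSpace ℝ (Fin p) → ℝ)
    (hJ : ∀ θ, J θ =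
      ‖X₀ - Matrix.toEuclideanLin Ξ θ - Matrix.toEuclideanLin K (ω θ)‖ ^ 2
        + γ * ⟪ω θ, Matrix.toEuclideanLin K (ω θ)⟫)
    (θstar : EuclideanSpace ℝ (Fin p))
    (hθstar : θstar = Matrix.toEuclideanLin ((Ξᵀ * Ψ * Ξ)⁻¹ * Ξᵀ * Ψ) X₀) :
    ∀ θ : EuclideanSpace ℝ (Fin p), J θstar ≤ J θ := by
  have hA : (K + γ • (1 : Matrix (Fin T) (Fin T) ℝ)).PosDef :=
    PosDef.posSemidef_add hK (PosDef.one.smul hγ)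
  have hres : (K + γ • 1) * Ψ = 1 :=
    hΨ ▸ mul_nonsing_inv _ ((isUnit_iff_isUnit_det _).1 hA.isUnit)
  have hΨpos : (toEuclideanLin Ψ).IsPositive :=
    isPositive_toEuclideanLin_iff.2 (hΨ ▸ hA.inv.posSemidef)
  have hcost : ∀ θ, J θ =
      γ * ⟪X₀ - toEuclideanLin Ξ θ, toEuclideanLin Ψ (X₀ - toEuclideanLin Ξ θ)⟫ := fun θ => by
    rw [hJ, hω]
    exact norm_sub_sq_add_inner_eq_of_resolvent (toEuclideanLin_add_smul_apply_eq_self hres) _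
  intro θ
  rw [hcost, hcost]
  gcongr
  exact hΨpos.inner_sub_apply_le_of_orthogonal _ _
    (hθstar ▸ inner_toEuclideanLin_gls_residual_eq_zero hinv X₀) θ
end
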